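/- Let F₂(x) = (μ/2)·(1−x³) + (1/8)·(ε−x³) + x³(1−ε)/(1+x²)^{3/2}. For every μ > 0 and ε > 0 there exists exactly one x > 0 with F₂(x) = 0; i.e., for n = 2 there is exactly one rosette central configuration for every choice of the mass parameters. -/

import Mathlib

/-!
Since `(1 + x⁻²)^{3/2} = (1 + x²)^{3/2} / x³`, dividing `F₂(x)` by the positive factor
`x³ / (1 + x²)^{3/2}` leaves `C (1 + x⁻²)^{3/2} − A (1 + x²)^{3/2} + 1 − ε` with
`C = μ/2 + ε/8 > 0` and `A = μ/2 + 1/8 > 0`. This is strictly decreasing on `(0, ∞)`, tends to `+∞`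
at `0⁺` and to `−∞` at `+∞`, so it has exactly one zero there.
-/

/-- The central configuration function for `n = 2`:
`F₂(x) = (μ/2)(1−x³) + (1/8)(ε−x³) + x³(1−ε)/(1+x²)^{3/2}`. -/
noncomputable def F2 (μ ε x : ℝ) : ℝ :=
  μ / 2 * (1 - x ^ 3) + (1 / 8) * (ε - x ^ 3) +
    x ^ 3 * (1 - ε) / (1 + x ^ 2) ^ ((3 : ℝ) / 2)

open Real Filter Topology Set

theorem StrictAntiOn.existsUnique_eq_of_tendsto_Ioi {α δ : Type*} [ConditionallyCompleteLinearOrder α]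
    [TopologicalSpace α] [OrderTopology α] [DenselyOrdered α] [NoMaxOrder α] [LinearOrder δ]
    [TopologicalSpace δ] [OrderClosedTopology δ] [NoMaxOrder δ] [NoMinOrder δ]
    {f : α → δ} {a : α} (y : δ)
    (hf : StrictAntiOn f (Ioi a)) (hc : ContinuousOn f (Ioi a))
    (hlo : Tendsto f (𝓝[>] a) atTop) (hhi : Tendsto f atTop atBot) :
    ∃! x, a < x ∧ f x = y := by
  obtain ⟨p, hap, hp⟩ : ∃ p, a < p ∧ y < f p :=
    (eventually_mem_nhdsWithin.and (hlo.eventually_gt_atTop y)).exists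
  obtain ⟨q, hpq, hq⟩ : ∃ q, p < q ∧ f q < y :=
    ((eventually_gt_atTop p).and (hhi.eventually_lt_atBot y)).exists
  obtain ⟨x, hx, hfx⟩ := intermediate_value_Icc' hpq.le
    (hc.mono ((Icc_subset_Ioi_iff hpq.le).2 hap)) ⟨hq.le, hp.le⟩
  have hax : a < x := hap.trans_le hx.1
  exact ⟨x, ⟨hax, hfx⟩, fun z hz => hf.injOn hz.1 hax (hz.2.trans hfx.symm)⟩

noncomputable def hypotCube (y : ℝ) : ℝ := (1 + y ^ 2) ^ ((3 : ℝ) / 2)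

lemma hypotCube_pos (y : ℝ) : 0 < hypotCube y := by
  unfold hypotCube; positivity

lemma continuous_hypotCube : Continuous hypotCube :=
  (continuous_const.add (continuous_pow 2)).rpow_const fun _ => Or.inr (by norm_num)

lemma strictMonoOn_hypotCube : StrictMonoOn hypotCube (Ici 0) := fun y hy z _ hyz => by
  have : y ^ 2 < z ^ 2 := pow_lt_pow_left₀ hyz hy (by norm_num)
  exact rpow_lt_rpow (by positivity) (by linarith) (by norm_num)

lemma tendsto_hypotCube_atTop : Tendsto hypotCube atTop atTop :=
  (tendsto_rpow_atTop (by norm_num)).comp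
    (tendsto_atTop_add_const_left _ 1 (tendsto_pow_atTop two_ne_zero))

lemma hypotCube_inv {x : ℝ} (hx : 0 < x) : hypotCube x⁻¹ = hypotCube x / x ^ 3 := by
  have hsq : (x ^ 2) ^ ((3 : ℝ) / 2) = x ^ 3 := by
    rw [← rpow_natCast x 2, ← rpow_mul hx.le, ← rpow_natCast x 3]
    norm_num
  have h : 1 + x⁻¹ ^ 2 = (1 + x ^ 2) / x ^ 2 := by field_simp; ring
  rw [hypotCube, h, div_rpow (by positivity) (by positivity), hsq, hypotCube]

noncomputable def F2Reduced (μ ε x : ℝ) : ℝ :=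
  (μ / 2 + ε / 8) * hypotCube x⁻¹ - (μ / 2 + 1 / 8) * hypotCube x + (1 - ε)

lemma F2_eq_mul_F2Reduced (μ ε : ℝ) {x : ℝ} (hx : 0 < x) :
    F2 μ ε x = x ^ 3 / hypotCube x * F2Reduced μ ε x := by
  have := hypotCube_pos x
  rw [F2Reduced, hypotCube_inv hx, F2, ← hypotCube]
  field_simp
  ring

section
variable {μ ε : ℝ}

lemma strictAntiOn_F2Reduced (hμ : 0 < μ) (hε : 0 < ε) : StrictAntiOn (F2Reduced μ ε) (Ioi 0) := by
  rintro x (hx : 0 < x) y (hy : 0 < y) hxy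
  have hinv := strictMonoOn_hypotCube (mem_Ici.2 (inv_pos.2 hy).le) (mem_Ici.2 (inv_pos.2 hx).le)
    (inv_strictAnti₀ hx hxy)
  have hdir := strictMonoOn_hypotCube (mem_Ici.2 hx.le) (mem_Ici.2 hy.le) hxy
  unfold F2Reduced
  nlinarith

lemma continuousOn_F2Reduced : ContinuousOn (F2Reduced μ ε) (Ioi 0) := by
  have hinv : ContinuousOn (fun x : ℝ => hypotCube x⁻¹) (Ioi 0) :=
    continuous_hypotCube.comp_continuousOn (continuousOn_inv₀.mono fun x hx => ne_of_gt hx)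
  exact ((hinv.const_mul _).sub (continuous_hypotCube.continuousOn.const_mul _)).add_const _

lemma tendsto_F2Reduced_nhdsGT_zero (hμ : 0 < μ) (hε : 0 < ε) :
    Tendsto (F2Reduced μ ε) (𝓝[>] 0) atTop := by
  have hfar : Tendsto (fun x => (μ / 2 + ε / 8) * hypotCube x⁻¹) (𝓝[>] 0) atTop :=
    (tendsto_hypotCube_atTop.comp tendsto_inv_nhdsGT_zero).const_mul_atTop (by positivity)
  have hnear : Tendsto (fun x => -(μ / 2 + 1 / 8) * hypotCube x + (1 - ε)) (𝓝[>] 0)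
      (𝓝 (-(μ / 2 + 1 / 8) * hypotCube 0 + (1 - ε))) :=
    ((continuous_hypotCube.tendsto 0).mono_left nhdsWithin_le_nhds).const_mul _ |>.add_const _
  refine (hfar.atTop_add hnear).congr fun x => ?_
  unfold F2Reduced; ring

lemma tendsto_F2Reduced_atTop (hμ : 0 < μ) : Tendsto (F2Reduced μ ε) atTop atBot := by
  have hnear : Tendsto (fun x => (μ / 2 + ε / 8) * hypotCube x⁻¹ + (1 - ε)) atTop
      (𝓝 ((μ / 2 + ε / 8) * hypotCube 0 + (1 - ε))) :=
    ((continuous_hypotCube.tendsto 0).comp tendsto_inv_atTop_zero).const_mul _ |>.add_const _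
  have hfar : Tendsto (fun x => -(μ / 2 + 1 / 8) * hypotCube x) atTop atBot :=
    tendsto_const_nhds.neg_mul_atTop (by linarith) tendsto_hypotCube_atTop
  refine (hnear.add_atBot hfar).congr fun x => ?_
  unfold F2Reduced; ring

end

/-- For every `μ > 0` and `ε > 0` there exists exactly one `x > 0` with `F₂(x) = 0`:
for `n = 2` there is exactly one rosette central configuration. -/
theorem n_eq_two_unique_cc (μ ε : ℝ) (hμ : 0 < μ) (hε : 0 < ε) :
    ∃! x : ℝ, 0 < x ∧ F2 μ ε x = 0 := by
  have hzero : ∀ x, 0 < x → (F2 μ ε x = 0 ↔ F2Reduced μ ε x = 0) := fun x hx => by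
    have := hypotCube_pos x
    rw [F2_eq_mul_F2Reduced μ ε hx, mul_eq_zero_iff_left (by positivity)]
  obtain ⟨x, ⟨hx, hfx⟩, huniq⟩ := (strictAntiOn_F2Reduced hμ hε).existsUnique_eq_of_tendsto_Ioi 0
    continuousOn_F2Reduced (tendsto_F2Reduced_nhdsGT_zero hμ hε) (tendsto_F2Reduced_atTop hμ)
  exact ⟨x, ⟨hx, (hzero x hx).2 hfx⟩, fun z ⟨hz, hfz⟩ => huniq z ⟨hz, (hzero z hz).1 hfz⟩⟩
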